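/- For a nonzero linear functional f on an algebra H over a field, if I is maximal among two-sided ideals of H contained in ker(f) and H/I is finite-dimensional, then the span T of the functionals y ↦ f(xyz) (for x, z ∈ H), viewed as functionals on W = H/I, is all of W*. -/

import Mathlib

/-!
The kernel of the sandwich functionals `y ↦ f (x * y * z)` is the largest two-sided ideal
contained in `ker f`, so by maximality it equals `I`. Hence the span `T` of these functionals
has coannihilator `I`; since `H / I` is finite-dimensional, so is `T`, and a finite-dimensional
space of functionals is the annihilator of its coannihilator.
-/

open Module Submodule

namespace Subspace

variable {K V : Type*} [Field K] [AddCommGroup V] [Module K V]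

theorem mem_of_dualCoannihilator_eq {W : Submodule K (Dual K V)} {U : Submodule K V}
    [FiniteDimensional K (V ⧸ U)] (hW : W.dualCoannihilator = U) {φ : Dual K V}
    (hφ : U ≤ LinearMap.ker φ) : φ ∈ W := by
  subst hW
  have := finiteDimensional_quot_dualCoannihilator_iff.mp ‹_›
  rw [← dualCoannihilator_dualAnnihilator_eq (W := W), mem_dualAnnihilator]
  exact fun v hv ↦ hφ hv

end Subspace

section Sandwich

variable {k H : Type*} [Field k] [Ring H] [Algebra k H]

def sandwichFunctionals (f : Dual k H) : Set (Dual k H) :=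
  {g | ∃ x z : H, g = f ∘ₗ LinearMap.mulLeft k x ∘ₗ LinearMap.mulRight k z}

def coreIdeal (f : Dual k H) : Submodule k H :=
  (span k (sandwichFunctionals f)).dualCoannihilator

theorem mem_coreIdeal {f : Dual k H} {y : H} :
    y ∈ coreIdeal f ↔ ∀ x z : H, f (x * (y * z)) = 0 := by
  simp only [coreIdeal, mem_dualCoannihilator]
  change span k _ ≤ LinearMap.ker (Dual.eval k H y) ↔ _
  rw [span_le]
  constructor
  · exact fun h x z ↦ h ⟨x, z, rfl⟩
  · rintro h _ ⟨x, z, rfl⟩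
    exact h x z

theorem mul_mem_coreIdeal_left {f : Dual k H} (x : H) {y : H} (hy : y ∈ coreIdeal f) :
    x * y ∈ coreIdeal f :=
  mem_coreIdeal.2 fun a z ↦ by
    simpa only [mul_assoc] using mem_coreIdeal.1 hy (a * x) z

theorem mul_mem_coreIdeal_right {f : Dual k H} (x : H) {y : H} (hy : y ∈ coreIdeal f) :
    y * x ∈ coreIdeal f :=
  mem_coreIdeal.2 fun a z ↦ by
    simpa only [mul_assoc] using mem_coreIdeal.1 hy a (x * z)

theorem apply_eq_zero_of_mem_coreIdeal {f : Dual k H} {y : H} (hy : y ∈ coreIdeal f) :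
    f y = 0 := by
  simpa using mem_coreIdeal.1 hy 1 1

theorem le_coreIdeal {f : Dual k H} {I : Submodule k H}
    (hIl : ∀ x y : H, y ∈ I → x * y ∈ I) (hIr : ∀ x y : H, y ∈ I → y * x ∈ I)
    (hIker : ∀ y ∈ I, f y = 0) : I ≤ coreIdeal f :=
  fun y hy ↦ mem_coreIdeal.2 fun x z ↦ hIker _ (hIl x _ (hIr z y hy))

end Sandwich

theorem stmt18_general {k H : Type*} [Field k] [Ring H] [Algebra k H]
    (f : H →ₗ[k] k)
    (I : Submodule k H)
    (hIl : ∀ x y : H, y ∈ I → x * y ∈ I)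
    (hIr : ∀ x y : H, y ∈ I → y * x ∈ I)
    (hIker : ∀ y ∈ I, f y = 0)
    (hmax : ∀ J : Submodule k H, (∀ x y : H, y ∈ J → x * y ∈ J) →
      (∀ x y : H, y ∈ J → y * x ∈ J) → (∀ y ∈ J, f y = 0) → I ≤ J → J = I)
    [FiniteDimensional k (H ⧸ I)] :
    ∀ φ : H →ₗ[k] k, (∀ y ∈ I, φ y = 0) →
      φ ∈ Submodule.span k
        {g : H →ₗ[k] k |
          ∃ x z : H, g = f ∘ₗ LinearMap.mulLeft k x ∘ₗ LinearMap.mulRight k z} := by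
  intro φ hφ
  have hcore : coreIdeal f = I :=
    hmax _ mul_mem_coreIdeal_left mul_mem_coreIdeal_right
      (fun _ ↦ apply_eq_zero_of_mem_coreIdeal) (le_coreIdeal hIl hIr hIker)
  exact Subspace.mem_of_dualCoannihilator_eq hcore hφ

/-- Let `f` be a nonzero linear functional on an algebra `H` over a field, and `I` a
two-sided ideal maximal among those contained in `ker f`, with `H/I` finite-dimensional.
Then the span of the functionals `y ↦ f(xyz)` (over all `x, z ∈ H`), viewed as
functionals on `W = H/I`, is all of `W*`: every functional vanishing on `I` lies in the
span of the functionals `y ↦ f(xyz)`. -/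
theorem stmt18 {k H : Type*} [Field k] [Ring H] [Algebra k H]
    (f : H →ₗ[k] k) (hf : f ≠ 0)
    (I : Submodule k H)
    (hIl : ∀ x y : H, y ∈ I → x * y ∈ I)
    (hIr : ∀ x y : H, y ∈ I → y * x ∈ I)
    (hIker : ∀ y ∈ I, f y = 0)
    (hmax : ∀ J : Submodule k H, (∀ x y : H, y ∈ J → x * y ∈ J) →
      (∀ x y : H, y ∈ J → y * x ∈ J) → (∀ y ∈ J, f y = 0) → I ≤ J → J = I)
    [FiniteDimensional k (H ⧸ I)] :
    ∀ φ : H →ₗ[k] k, (∀ y ∈ I, φ y = 0) →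
      φ ∈ Submodule.span k
        {g : H →ₗ[k] k |
          ∃ x z : H, g = f ∘ₗ LinearMap.mulLeft k x ∘ₗ LinearMap.mulRight k z} :=
  stmt18_general f I hIl hIr hIker hmax
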